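/- Let D be a central division algebra over C of characteristic p with derivation δ and f(t) = g(t) − d ∈ D[t;δ] as above, and let A = (D,δ,d) be the resulting nonassociative differential extension with Nuc(A) ⊆ D. For every invertible a ∈ Nuc(A), the inner automorphism G_a(h) = (a^{−1}h)a of A equals H_{i_a, a^{−1}δ(a)}, i.e., G_a restricted to D is conjugation x ↦ a^{−1}xa and G_a(t) = t + a^{−1}δ(a). -/

import Mathlib

/-- A differential (Ore) polynomial ring `D[t;δ]`: a ring containing `D` via the
ring embedding `ι`, with an element `t` satisfying `t·a = a·t + δ(a)`, and which is
freely spanned as a left `D`-module by the powers of `t` (via `rep`). -/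
structure DiffPolyRing (D : Type*) [Ring D] (δ : D → D) where
  carrier : Type*
  [ring : Ring carrier]
  ι : D →+* carrier
  t : carrier
  tcomm : ∀ a : D, t * ι a = ι a * t + ι (δ a)
  rep : carrier ≃+ (ℕ →₀ D)
  rep_symm_apply : ∀ c : ℕ →₀ D, rep.symm c = c.sum fun i a => ι a * t ^ i

attribute [instance] DiffPolyRing.ring

namespace DiffPolyRing

variable {D : Type*} [Ring D] {δ : D → D}

/-- The degree of a differential polynomial, with `deg 0 = ⊥`. -/
noncomputable def deg (P : DiffPolyRing D δ) (p : P.carrier) : WithBot ℕ :=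
  (P.rep p).support.max

end DiffPolyRing

/-! Since `t·a = a·t + δ(a)`, conjugating by the unit `a` sends `t` to `a⁻¹·t·a = t + a⁻¹δ(a)`,
hence `Σ bᵢ tⁱ` to `Σ a⁻¹bᵢa (t + a⁻¹δ(a))ⁱ`. Conjugation by an element of `D` does not raise
degrees, and right division by `f` has a unique remainder because leading coefficients multiply
(`D` has no zero divisors); so both reductions modulo `f` in `G_a(h) = (a⁻¹h)a` do nothing
when `deg h < deg f`. -/

namespace DiffPolyRing

section Ring

variable {D : Type*} [Ring D] {δ : D → D} (P : DiffPolyRing D δ)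

lemma rep_ι_mul_t_pow (a : D) (i : ℕ) : P.rep (P.ι a * P.t ^ i) = Finsupp.single i a := by
  rw [← P.rep.apply_symm_apply (Finsupp.single i a), P.rep_symm_apply,
    Finsupp.sum_single_index (by rw [map_zero, zero_mul])]

lemma eq_sum_rep (p : P.carrier) : p = (P.rep p).sum fun i a => P.ι a * P.t ^ i := by
  rw [← P.rep_symm_apply, AddEquiv.symm_apply_apply]

lemma rep_finsupp_sum (c : ℕ →₀ D) (g : ℕ → D → P.carrier) (k : ℕ) :
    P.rep (c.sum g) k = c.sum fun i a => P.rep (g i a) k := by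
  rw [Finsupp.sum, Finsupp.sum, map_sum, Finset.sum_apply']

lemma le_deg_of_rep_ne_zero {p : P.carrier} {i : ℕ} (h : P.rep p i ≠ 0) :
    (i : WithBot ℕ) ≤ P.deg p :=
  Finset.le_max (Finsupp.mem_support_iff.mpr h)

lemma rep_eq_zero_of_deg_lt {p : P.carrier} {i : ℕ} (h : P.deg p < i) : P.rep p i = 0 := by
  by_contra hi
  exact (P.le_deg_of_rep_ne_zero hi).not_gt h

lemma deg_le_iff {p : P.carrier} {n : WithBot ℕ} :
    P.deg p ≤ n ↔ ∀ i : ℕ, P.rep p i ≠ 0 → (i : WithBot ℕ) ≤ n := by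
  simp only [deg, Finset.max_le_iff, Finsupp.mem_support_iff]
  exact Iff.rfl

lemma exists_deg_eq_of_ne_zero {p : P.carrier} (hp : p ≠ 0) :
    ∃ n : ℕ, P.deg p = n ∧ P.rep p n ≠ 0 := by
  obtain ⟨n, hn⟩ := Finset.max_of_nonempty
    (Finsupp.support_nonempty_iff.mpr ((EmbeddingLike.map_ne_zero_iff (f := P.rep)).mpr hp))
  exact ⟨n, hn, Finsupp.mem_support_iff.mp (Finset.mem_of_max hn)⟩

lemma deg_add_le (p q : P.carrier) : P.deg (p + q) ≤ max (P.deg p) (P.deg q) := by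
  classical
  simp only [deg, map_add]
  exact (Finset.max_mono Finsupp.support_add).trans_eq Finset.max_union

lemma deg_sub_le (p q : P.carrier) : P.deg (p - q) ≤ max (P.deg p) (P.deg q) := by
  classical
  simp only [deg, map_sub]
  exact (Finset.max_mono Finsupp.support_sub).trans_eq Finset.max_union

lemma deg_finsupp_sum_le (c : ℕ →₀ D) (g : ℕ → D → P.carrier) (n : WithBot ℕ)
    (h : ∀ i ∈ c.support, P.deg (g i (c i)) ≤ n) : P.deg (c.sum g) ≤ n := by
  rw [deg_le_iff]
  intro k hk
  rw [P.rep_finsupp_sum] at hk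
  obtain ⟨i, hi, hne⟩ := Finset.exists_ne_zero_of_sum_ne_zero hk
  exact (P.le_deg_of_rep_ne_zero hne).trans (h i hi)

lemma deg_ι_mul_t_pow_le (a : D) (i : ℕ) : P.deg (P.ι a * P.t ^ i) ≤ i := by
  rw [deg, rep_ι_mul_t_pow]
  exact (Finset.max_mono Finsupp.support_single_subset).trans_eq Finset.max_singleton

lemma deg_ι_le (a : D) : P.deg (P.ι a) ≤ 0 := by
  simpa using P.deg_ι_mul_t_pow_le a 0

lemma deg_t_pow_le (i : ℕ) : P.deg (P.t ^ i) ≤ i := by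
  simpa using P.deg_ι_mul_t_pow_le 1 i

lemma deg_ι_mul_le (b : D) (p : P.carrier) : P.deg (P.ι b * p) ≤ P.deg p := by
  conv_lhs => rw [P.eq_sum_rep p, Finsupp.mul_sum]
  refine P.deg_finsupp_sum_le _ _ _ fun i hi => ?_
  rw [← mul_assoc, ← map_mul]
  exact (P.deg_ι_mul_t_pow_le _ i).trans (P.le_deg_of_rep_ne_zero (Finsupp.mem_support_iff.mp hi))

lemma deg_t_mul_le (p : P.carrier) : P.deg (P.t * p) ≤ P.deg p + 1 := by
  conv_lhs => rw [P.eq_sum_rep p, Finsupp.mul_sum]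
  refine P.deg_finsupp_sum_le _ _ _ fun i hi => ?_
  have hi : (i : WithBot ℕ) ≤ P.deg p := P.le_deg_of_rep_ne_zero (Finsupp.mem_support_iff.mp hi)
  rw [← mul_assoc, P.tcomm, add_mul, mul_assoc, ← pow_succ']
  refine (P.deg_add_le _ _).trans (max_le ?_ ?_)
  · exact (P.deg_ι_mul_t_pow_le _ _).trans (by rw [Nat.cast_succ]; exact add_le_add_left hi 1)
  · exact (P.deg_ι_mul_t_pow_le _ _).trans (hi.trans (le_add_of_nonneg_right (by norm_num)))

lemma deg_t_pow_mul_le (n : ℕ) (p : P.carrier) : P.deg (P.t ^ n * p) ≤ n + P.deg p := by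
  induction n with
  | zero => simp
  | succ n ih =>
    rw [pow_succ', mul_assoc, Nat.cast_succ, add_right_comm]
    exact (P.deg_t_mul_le _).trans (add_le_add_left ih 1)

lemma deg_mul_le (p q : P.carrier) : P.deg (p * q) ≤ P.deg p + P.deg q := by
  conv_lhs => rw [P.eq_sum_rep p, Finsupp.sum_mul]
  refine P.deg_finsupp_sum_le _ _ _ fun i hi => ?_
  rw [mul_assoc]
  refine (P.deg_ι_mul_le _ _).trans ((P.deg_t_pow_mul_le i q).trans ?_)
  exact add_le_add_left (P.le_deg_of_rep_ne_zero (Finsupp.mem_support_iff.mp hi)) _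

lemma deg_mul_ι_le (p : P.carrier) (a : D) : P.deg (p * P.ι a) ≤ P.deg p :=
  (P.deg_mul_le _ _).trans (by simpa using add_le_add (le_refl (P.deg p)) (P.deg_ι_le a))

lemma t_pow_mul_ι (n : ℕ) (a : D) :
    ∃ r : P.carrier, P.t ^ n * P.ι a = P.ι a * P.t ^ n + r ∧ P.deg r < n := by
  induction n with
  | zero => exact ⟨0, by simp, by simp [deg]⟩
  | succ n ih =>
    obtain ⟨r, hr, hdr⟩ := ih
    refine ⟨P.ι (δ a) * P.t ^ n + P.t * r, ?_, ?_⟩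
    · calc P.t ^ (n + 1) * P.ι a = P.t * (P.t ^ n * P.ι a) := by rw [pow_succ', mul_assoc]
        _ = (P.ι a * P.t + P.ι (δ a)) * P.t ^ n + P.t * r := by
          rw [hr, mul_add, ← mul_assoc, P.tcomm]
        _ = P.ι a * P.t ^ (n + 1) + (P.ι (δ a) * P.t ^ n + P.t * r) := by
          rw [add_mul, mul_assoc, ← pow_succ', add_assoc]
    · refine (P.deg_add_le _ _).trans_lt (max_lt ?_ ?_)
      · exact (P.deg_ι_mul_t_pow_le _ _).trans_lt (by exact_mod_cast n.lt_succ_self)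
      · refine (P.deg_t_mul_le _).trans_lt ?_
        rw [Nat.cast_succ]
        exact WithBot.add_lt_add_right (by simp) hdr

lemma rep_ι_mul_t_pow_mul_ι_mul_t_pow (b c : D) (n j : ℕ) :
    P.rep (P.ι b * P.t ^ n * (P.ι c * P.t ^ j)) (n + j) = b * c := by
  obtain ⟨r, hr, hdr⟩ := P.t_pow_mul_ι n c
  have hlow : P.deg (P.ι b * r * P.t ^ j) < (n + j : ℕ) := by
    refine (P.deg_mul_le _ _).trans_lt ((add_le_add le_rfl (P.deg_t_pow_le j)).trans_lt ?_)
    rw [Nat.cast_add]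
    exact WithBot.add_lt_add_right (by simp) ((P.deg_ι_mul_le b r).trans_lt hdr)
  have hexp : P.ι b * P.t ^ n * (P.ι c * P.t ^ j)
      = P.ι (b * c) * P.t ^ (n + j) + P.ι b * r * P.t ^ j := by
    rw [mul_assoc, ← mul_assoc (P.t ^ n), hr, add_mul, mul_add, mul_assoc (P.ι c), ← pow_add,
      ← mul_assoc, ← map_mul, mul_assoc (P.ι b)]
  rw [hexp, map_add P.rep, Finsupp.add_apply, rep_ι_mul_t_pow, P.rep_eq_zero_of_deg_lt hlow,
    Finsupp.single_eq_same, add_zero]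

lemma rep_ι_mul_t_pow_mul_top {q : P.carrier} {m : ℕ} (hq : P.deg q ≤ m) (b : D) (n : ℕ) :
    P.rep (P.ι b * P.t ^ n * q) (n + m) = b * P.rep q m := by
  conv_lhs => rw [P.eq_sum_rep q, Finsupp.mul_sum]
  rw [rep_finsupp_sum, Finsupp.sum_eq_single m]
  · exact P.rep_ι_mul_t_pow_mul_ι_mul_t_pow b _ n m
  · intro j hj hne
    have hjm : j < m := lt_of_le_of_ne (by exact_mod_cast (P.le_deg_of_rep_ne_zero hj).trans hq) hne
    refine P.rep_eq_zero_of_deg_lt ((P.deg_mul_le _ _).trans_lt ?_)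
    refine (add_le_add (P.deg_ι_mul_t_pow_le b n) (P.deg_ι_mul_t_pow_le _ j)).trans_lt ?_
    exact_mod_cast Nat.add_lt_add_left hjm n
  · intro _
    rw [map_zero, zero_mul, mul_zero, map_zero, Finsupp.zero_apply]

lemma rep_mul_top {p q : P.carrier} {n m : ℕ} (hp : P.deg p ≤ n) (hq : P.deg q ≤ m) :
    P.rep (p * q) (n + m) = P.rep p n * P.rep q m := by
  conv_lhs => rw [P.eq_sum_rep p, Finsupp.sum_mul]
  rw [rep_finsupp_sum, Finsupp.sum_eq_single n]
  · exact P.rep_ι_mul_t_pow_mul_top hq _ n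
  · intro i hi hne
    have hin : i < n := lt_of_le_of_ne (by exact_mod_cast (P.le_deg_of_rep_ne_zero hi).trans hp) hne
    refine P.rep_eq_zero_of_deg_lt ((P.deg_mul_le _ _).trans_lt ?_)
    refine (add_le_add (P.deg_ι_mul_t_pow_le _ i) hq).trans_lt ?_
    exact_mod_cast Nat.add_lt_add_right hin m
  · intro _
    rw [map_zero, zero_mul, zero_mul, map_zero, Finsupp.zero_apply]

lemma deg_le_deg_mul [NoZeroDivisors D] {q : P.carrier} (hq : q ≠ 0) (f : P.carrier) :
    P.deg f ≤ P.deg (q * f) := by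
  rcases eq_or_ne f 0 with rfl | hf
  · rw [mul_zero]
  obtain ⟨n, hn, hqn⟩ := P.exists_deg_eq_of_ne_zero hq
  obtain ⟨m, hm, hfm⟩ := P.exists_deg_eq_of_ne_zero hf
  have hlead : P.rep (q * f) (n + m) ≠ 0 := by
    rw [P.rep_mul_top hn.le hm.le]
    exact mul_ne_zero hqn hfm
  rw [hm]
  exact (by exact_mod_cast m.le_add_left n : (m : WithBot ℕ) ≤ (n + m : ℕ)).trans
    (P.le_deg_of_rep_ne_zero hlead)

lemma eq_of_eq_mul_add_of_deg_lt [NoZeroDivisors D] {g q f r : P.carrier} (h : g = q * f + r)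
    (hg : P.deg g < P.deg f) (hr : P.deg r < P.deg f) : r = g := by
  have hqf : q * f = g - r := eq_sub_of_add_eq h.symm
  have hdeg : P.deg (q * f) < P.deg f := hqf ▸ (P.deg_sub_le g r).trans_lt (max_lt hg hr)
  have hq : q = 0 := by
    by_contra hq
    exact (P.deg_le_deg_mul hq f).not_gt hdeg
  rw [h, hq, zero_mul, zero_add]

end Ring

section DivisionRing

variable {D : Type*} [DivisionRing D] {δ : D → D} (P : DiffPolyRing D δ) {a : D}

lemma ι_inv_mul_t_mul_ι (ha : a ≠ 0) : P.ι a⁻¹ * P.t * P.ι a = P.t + P.ι (a⁻¹ * δ a) := by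
  rw [mul_assoc, P.tcomm, mul_add, ← mul_assoc, ← map_mul, inv_mul_cancel₀ ha, map_one, one_mul,
    ← map_mul]

lemma ι_inv_mul_t_pow_mul_ι (ha : a ≠ 0) (i : ℕ) :
    P.ι a⁻¹ * P.t ^ i * P.ι a = (P.t + P.ι (a⁻¹ * δ a)) ^ i := by
  rw [← P.ι_inv_mul_t_mul_ι ha]
  exact (Units.conj_pow' (Units.map P.ι.toMonoidHom (Units.mk0 a ha)) P.t i).symm

lemma ι_inv_mul_mul_ι (ha : a ≠ 0) (h : P.carrier) :
    P.ι a⁻¹ * h * P.ι a =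
      (P.rep h).sum fun i b => P.ι (a⁻¹ * b * a) * (P.t + P.ι (a⁻¹ * δ a)) ^ i := by
  conv_lhs => rw [P.eq_sum_rep h, Finsupp.mul_sum, Finsupp.sum_mul]
  refine Finsupp.sum_congr fun i _ => ?_
  rw [← P.ι_inv_mul_t_pow_mul_ι ha, map_mul, map_mul]
  simp only [mul_assoc]
  rw [← mul_assoc (P.ι a) (P.ι a⁻¹), ← map_mul, mul_inv_cancel₀ ha, map_one, one_mul]

end DivisionRing

end DiffPolyRing

theorem inner_automorphism_eq_H_general
    (D : Type*) [DivisionRing D] (δ : D → D)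
    (P : DiffPolyRing D δ)
    (f : P.carrier)
    (modf : P.carrier → P.carrier)
    (hmod : ∀ g : P.carrier, P.deg (modf g) < P.deg f ∧ ∃ q, g = q * f + modf g)
    (a : D) (ha : a ≠ 0) :
    P.ι a⁻¹ * P.t * P.ι a = P.t + P.ι (a⁻¹ * δ a) ∧
    ∀ h : P.carrier, P.deg h < P.deg f →
      modf (modf (P.ι a⁻¹ * h) * P.ι a) =
        (P.rep h).sum fun i b => P.ι (a⁻¹ * b * a) * (P.t + P.ι (a⁻¹ * δ a)) ^ i := by
  have modf_eq_self : ∀ g, P.deg g < P.deg f → modf g = g := fun g hg =>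
    let ⟨hr, _, hq⟩ := hmod g
    P.eq_of_eq_mul_add_of_deg_lt hq hg hr
  refine ⟨P.ι_inv_mul_t_mul_ι ha, fun h hh => ?_⟩
  have hdeg : P.deg (P.ι a⁻¹ * h) < P.deg f := (P.deg_ι_mul_le _ h).trans_lt hh
  rw [modf_eq_self _ hdeg, modf_eq_self _ ((P.deg_mul_ι_le _ a).trans_lt hdeg),
    P.ι_inv_mul_mul_ι ha]

/-- for an invertible `a` in the nucleus of `A = (D,δ,d)`, the inner
automorphism `G_a(h) = (a⁻¹h)a` equals `H_{i_a, a⁻¹δ(a)}`; in particular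
`a⁻¹·t·a = t + a⁻¹δ(a)` in `D[t;δ]` and
`G_a(Σ b_i t^i) = Σ a⁻¹b_i a (t + a⁻¹δ(a))^i`. -/
theorem inner_automorphism_eq_H
    (D : Type*) [DivisionRing D] (δ : D → D)
    (hadd : ∀ a b : D, δ (a + b) = δ a + δ b)
    (hmul : ∀ a b : D, δ (a * b) = a * δ b + δ a * b)
    (P : DiffPolyRing D δ)
    (f : P.carrier) (hm : (1 : WithBot ℕ) < P.deg f)
    (modf : P.carrier → P.carrier)
    (hmod : ∀ g : P.carrier, P.deg (modf g) < P.deg f ∧ ∃ q, g = q * f + modf g)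
    (a : D) (ha : a ≠ 0)
    -- `ι a` lies in the nucleus of `S_f`:
    (hnuc : ∀ x y : P.carrier, P.deg x < P.deg f → P.deg y < P.deg f →
      modf (modf (P.ι a * x) * y) = modf (P.ι a * modf (x * y)) ∧
      modf (modf (x * P.ι a) * y) = modf (x * modf (P.ι a * y)) ∧
      modf (modf (x * y) * P.ι a) = modf (x * modf (y * P.ι a))) :
    P.ι a⁻¹ * P.t * P.ι a = P.t + P.ι (a⁻¹ * δ a) ∧
    ∀ h : P.carrier, P.deg h < P.deg f →
      modf (modf (P.ι a⁻¹ * h) * P.ι a) =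
        (P.rep h).sum fun i b => P.ι (a⁻¹ * b * a) * (P.t + P.ι (a⁻¹ * δ a)) ^ i :=
  inner_automorphism_eq_H_general D δ P f modf hmod a ha
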